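/- arXiv:2010.14075 — 4 statements merged into one kernel-verified Lean document; each statement's English description precedes it below -/
import Mathlib

section
/- Let K be a positive integer and θ_1,...,θ_K ∈ {0,1}. Define a = Σ_{j=1}^{K} 2^{-j-1}·θ_j. Then a ∈ [0, 1/2), and for every k ∈ {1,...,K}, σ₃(2^k · a) = θ_k, where σ₃(x) = 1 if x − ⌊x⌋ ≥ 1/2 and 0 otherwise. -/
/-- σ₃(x) = 1 if the fractional part of x is ≥ 1/2, else 0. -/
noncomputable def sigma3 (x : ℝ) : ℝ := if (1:ℝ)/2 ≤ Int.fract x then 1 else 0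

/-! Multiplying by `2 ^ k` shifts the binary expansion: the digits `θ j` with `j < k` contribute an
integer, `θ k` contributes `θ k / 2`, and the later digits contribute a number in `[0, 1/2)`, since
they are dominated by the geometric sum `1/2 - 2 ^ (k - K - 1)`. So the fractional part of `2 ^ k * a`
is at least `1/2` exactly when `θ k = 1`. -/

open Finset

lemma sigma3_intCast_add (n : ℤ) (x : ℝ) : sigma3 (n + x) = sigma3 x := by
  rw [sigma3, sigma3, Int.fract_intCast_add]

lemma sigma3_half_add {b t : ℝ} (hb : b ∈ ({0, 1} : Set ℝ)) (ht : t ∈ Set.Ico (0:ℝ) (1/2)) :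
    sigma3 (b / 2 + t) = b := by
  obtain ⟨ht0, ht1⟩ := ht
  rcases hb with rfl | rfl
  · rw [sigma3, Int.fract_eq_self.mpr ⟨by linarith, by linarith⟩, if_neg (by linarith)]
  · rw [sigma3, Int.fract_eq_self.mpr ⟨by linarith, by linarith⟩, if_pos (by linarith)]

lemma sum_Ioc_zpow_two (k K : ℕ) (h : k ≤ K) :
    ∑ j ∈ Ioc k K, (2:ℝ) ^ ((k:ℤ) - j - 1) = 1/2 - 2 ^ ((k:ℤ) - K - 1) := by
  induction K, h using Nat.le_induction with
  | base => simp
  | succ K hkK ih =>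
    have hexp : (k:ℤ) - K - 1 = ((k:ℤ) - (K + 1 : ℕ) - 1) + 1 := by push_cast; ring
    rw [sum_Ioc_succ_top hkK, ih, hexp, zpow_add_one₀ two_ne_zero]
    ring

lemma sum_Ioc_zpow_two_mul_mem_Ico {θ : ℕ → ℝ} (hθ : ∀ j, θ j ∈ Set.Icc (0:ℝ) 1) (k K : ℕ) :
    ∑ j ∈ Ioc k K, (2:ℝ) ^ ((k:ℤ) - j - 1) * θ j ∈ Set.Ico (0:ℝ) (1/2) := by
  refine ⟨sum_nonneg fun j _ => mul_nonneg (by positivity) (hθ j).1, ?_⟩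
  rcases le_or_gt k K with hkK | hKk
  · calc ∑ j ∈ Ioc k K, (2:ℝ) ^ ((k:ℤ) - j - 1) * θ j
          ≤ ∑ j ∈ Ioc k K, (2:ℝ) ^ ((k:ℤ) - j - 1) :=
            sum_le_sum fun j _ => mul_le_of_le_one_right (by positivity) (hθ j).2
      _ = 1/2 - 2 ^ ((k:ℤ) - K - 1) := sum_Ioc_zpow_two k K hkK
      _ < 1/2 := sub_lt_self _ (by positivity)
  · simp [Ioc_eq_empty_of_le hKk.le]

lemma exists_intCast_eq_sum_zpow_two_mul {θ : ℕ → ℝ} {s : Finset ℕ} {k : ℕ}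
    (hθ : ∀ j ∈ s, ∃ n : ℤ, θ j = n) (hs : ∀ j ∈ s, j < k) :
    ∃ n : ℤ, ∑ j ∈ s, (2:ℝ) ^ ((k:ℤ) - j - 1) * θ j = n := by
  choose! b hb using hθ
  refine ⟨∑ j ∈ s, 2 ^ (k - j - 1) * b j, ?_⟩
  push_cast
  refine sum_congr rfl fun j hj => ?_
  rw [hb j hj, ← zpow_natCast]
  congr 2
  have := hs j hj
  omega

lemma two_pow_mul_sum_zpow_two_mul (θ : ℕ → ℝ) (s : Finset ℕ) (k : ℕ) :
    (2:ℝ) ^ k * ∑ j ∈ s, (2:ℝ) ^ (-(j:ℤ) - 1) * θ j = ∑ j ∈ s, (2:ℝ) ^ ((k:ℤ) - j - 1) * θ j := by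
  rw [mul_sum]
  refine sum_congr rfl fun j _ => ?_
  rw [← mul_assoc, ← zpow_natCast, ← zpow_add₀ two_ne_zero]
  ring_nf

theorem stmt0_general (K : ℕ) (θ : ℕ → ℝ)
    (hθ : ∀ j, θ j ∈ ({0, 1} : Set ℝ)) :
    (∑ j ∈ Finset.Icc 1 K, (2:ℝ) ^ (-(j:ℤ) - 1) * θ j) ∈ Set.Ico (0:ℝ) (1/2) ∧
    ∀ k ∈ Finset.Icc 1 K,
      sigma3 ((2:ℝ) ^ k * ∑ j ∈ Finset.Icc 1 K, (2:ℝ) ^ (-(j:ℤ) - 1) * θ j) = θ k := by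
  have hθ' : ∀ j, θ j = 0 ∨ θ j = 1 := hθ
  have hIcc : Icc 1 K = Ioc 0 K := Icc_add_one_left_eq_Ioc 0 K
  have hθ01 : ∀ j, θ j ∈ Set.Icc (0:ℝ) 1 := fun j => by
    rcases hθ' j with h | h <;> simp [h]
  refine ⟨hIcc ▸ by simpa using sum_Ioc_zpow_two_mul_mem_Ico hθ01 0 K, fun k hk => ?_⟩
  obtain ⟨m, rfl⟩ : ∃ m, k = m + 1 := ⟨k - 1, by grind⟩
  have hmK : m + 1 ≤ K := (mem_Icc.mp hk).2
  obtain ⟨n, hn⟩ := exists_intCast_eq_sum_zpow_two_mul (θ := θ) (s := Ioc 0 m) (k := m + 1)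
    (fun j _ => (hθ' j).elim (fun h => ⟨0, by simp [h]⟩) (fun h => ⟨1, by simp [h]⟩))
    (fun j hj => by grind)
  have hdigit : (2:ℝ) ^ (((m + 1 : ℕ) : ℤ) - (m + 1 : ℕ) - 1) * θ (m + 1) = θ (m + 1) / 2 := by
    simp [div_eq_inv_mul]
  rw [two_pow_mul_sum_zpow_two_mul, hIcc, ← sum_Ioc_consecutive _ (Nat.zero_le (m + 1)) hmK,
    sum_Ioc_succ_top (Nat.zero_le m), hn, hdigit, add_assoc, sigma3_intCast_add]
  exact sigma3_half_add (hθ _) (sum_Ioc_zpow_two_mul_mem_Ico hθ01 _ _)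

theorem stmt0 (K : ℕ) (hK : 0 < K) (θ : ℕ → ℝ)
    (hθ : ∀ j, θ j ∈ ({0, 1} : Set ℝ)) :
    (∑ j ∈ Finset.Icc 1 K, (2:ℝ) ^ (-(j:ℤ) - 1) * θ j) ∈ Set.Ico (0:ℝ) (1/2) ∧
    ∀ k ∈ Finset.Icc 1 K,
      sigma3 ((2:ℝ) ^ k * ∑ j ∈ Finset.Icc 1 K, (2:ℝ) ^ (-(j:ℤ) - 1) * θ j) = θ k :=
  stmt0_general K θ hθ
end

section
/- Let f : [0,1]^d → ℝ be continuous and let N be a positive integer. Then there exist a₁,...,a_N ∈ [0,1/2) such that the function φ(x) = 2ω_f(√d)·Σ_{j=1}^N 2^{-j} σ₃( a_j · 2^{ 1 + Σ_{i=1}^d 2^{(i−1)N} ⌊2^N x_i⌋ } ) + f(0) − ω_f(√d) satisfies |φ(x) − f(x)| ≤ 2ω_f(√d)·2^{-N} + ω_f(√d·2^{-N}) for all x ∈ [0,1)^d. -/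
/-- The unit cube [0,1]^d in Euclidean space. -/
def unitCube (d : ℕ) : Set (EuclideanSpace ℝ (Fin d)) := {x | ∀ i, x i ∈ Set.Icc (0:ℝ) 1}

/-- Modulus of continuity of f on [0,1]^d with respect to the Euclidean norm. -/
noncomputable def modCont (d : ℕ) (f : EuclideanSpace ℝ (Fin d) → ℝ) (r : ℝ) : ℝ :=
  sSup {t | ∃ x ∈ unitCube d, ∃ y ∈ unitCube d, ‖x - y‖ ≤ r ∧ t = |f x - f y|}

/-!
Cells of the dyadic grid of mesh `2⁻ᴺ` in `[0,1)^d` are numbered by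
`K = ∑ 2^{(i-1)N} ⌊2ᴺ xᵢ⌋ < 2^{Nd}`. For each cell, the value of `f` at its lower corner, rescaled
from `[f 0 - ω, f 0 + ω]` to `[0, 1)`, is truncated to `N` binary digits. The number `a_j` stores
the `j`-th of these digits of every cell `K` at binary place `K + 2`, so multiplying by `2^{1+K}`
brings the digit of the cell of `x` to the first place after the binary point, where `σ₃` reads it.
Hence `φ x` is the truncated value at the corner of the cell of `x`: it is within `2ω 2⁻ᴺ` of `f`
at that corner, which is within `ω_f(√d 2⁻ᴺ)` of `f x`.
-/

open Finset

noncomputable def binFrac (b : ℕ → ℤ) (n : ℕ) : ℝ := ∑ i ∈ range n, (b i : ℝ) / 2 ^ (i + 1)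

lemma binFrac_succ (b : ℕ → ℤ) (n : ℕ) :
    binFrac b (n + 1) = (b 0 + binFrac (fun i => b (i + 1)) n) / 2 := by
  rw [binFrac, sum_range_succ', binFrac, add_div, sum_div, add_comm]
  congr 1
  · simp
  · refine sum_congr rfl fun i _ => ?_
    rw [pow_succ _ (i + 1), div_div]

section BinFrac

variable {b : ℕ → ℤ}

lemma binFrac_mem_Ico (hb : ∀ i, b i = 0 ∨ b i = 1) (n : ℕ) : binFrac b n ∈ Set.Ico 0 1 := by
  induction n generalizing b with
  | zero => simp [binFrac]
  | succ n ih =>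
    obtain ⟨h0, h1⟩ := ih fun i => hb (i + 1)
    rw [binFrac_succ, Set.mem_Ico]
    rcases hb 0 with h | h <;> rw [h] <;> push_cast <;> constructor <;> linarith

lemma fract_binFrac_mul_two_pow (hb : ∀ i, b i = 0 ∨ b i = 1) {k n : ℕ} (hk : k ≤ n) :
    Int.fract (binFrac b n * 2 ^ k) = binFrac (fun i => b (k + i)) (n - k) := by
  induction k generalizing b n with
  | zero => simpa using Int.fract_eq_self.2 (binFrac_mem_Ico hb n)
  | succ k ih =>
    obtain ⟨n, rfl⟩ : ∃ m, n = m + 1 := ⟨n - 1, by omega⟩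
    have hshift : binFrac b (n + 1) * 2 ^ (k + 1)
        = ((b 0 * 2 ^ k : ℤ) : ℝ) + binFrac (fun i => b (i + 1)) n * 2 ^ k := by
      rw [binFrac_succ]; push_cast; ring
    rw [hshift, Int.fract_intCast_add, ih (fun i => hb (i + 1)) (by omega)]
    congr 1
    · funext i; congr 1; omega
    · omega

/-- Multiplying by `2 ^ k` moves digit `k` to the first place after the binary point. -/
lemma sigma3_binFrac_mul_two_pow (hb : ∀ i, b i = 0 ∨ b i = 1) {k n : ℕ} (hk : k < n) :
    sigma3 (binFrac b n * 2 ^ k) = b k := by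
  obtain ⟨m, hm⟩ : ∃ m, n - k = m + 1 := ⟨n - k - 1, by omega⟩
  obtain ⟨h0, h1⟩ := binFrac_mem_Ico (fun i => hb (k + (i + 1))) m
  rw [sigma3, fract_binFrac_mul_two_pow hb hk.le, hm, binFrac_succ, add_zero]
  rcases hb k with h | h <;> rw [h] <;> push_cast
  · rw [if_neg (by linarith)]
  · rw [if_pos (by linarith)]

end BinFrac

noncomputable def binDigit (t : ℝ) (i : ℕ) : ℤ := ⌊t * 2 ^ (i + 1)⌋ - 2 * ⌊t * 2 ^ i⌋

lemma binDigit_eq_zero_or_one (t : ℝ) (i : ℕ) : binDigit t i = 0 ∨ binDigit t i = 1 := by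
  have hle : 2 * ⌊t * 2 ^ i⌋ ≤ ⌊t * 2 ^ (i + 1)⌋ := by
    rw [Int.le_floor]; push_cast; rw [pow_succ]; linarith [Int.floor_le (t * 2 ^ i)]
  have hlt : ⌊t * 2 ^ (i + 1)⌋ < 2 * ⌊t * 2 ^ i⌋ + 2 := by
    rw [Int.floor_lt]; push_cast; rw [pow_succ]; linarith [Int.lt_floor_add_one (t * 2 ^ i)]
  unfold binDigit; omega

lemma binFrac_binDigit (t : ℝ) (n : ℕ) :
    binFrac (binDigit t) n = ⌊t * 2 ^ n⌋ / 2 ^ n - ⌊t⌋ := by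
  have htel := sum_range_sub (fun i => (⌊t * 2 ^ i⌋ : ℝ) / 2 ^ i) n
  simp only [pow_zero, mul_one, div_one] at htel
  rw [← htel, binFrac]
  refine sum_congr rfl fun i _ => ?_
  rw [binDigit]; push_cast; field_simp; ring

lemma sum_sigma3_binFrac_binDigit (t : ℕ → ℝ) {K M : ℕ} (ht : t K ∈ Set.Ico 0 1)
    (hK : K < M) (N : ℕ) :
    ∑ j ∈ Icc 1 N, (2:ℝ) ^ (-(j:ℤ)) *
        sigma3 (binFrac (fun k => binDigit (t k) (j - 1)) M / 2 * (2:ℝ) ^ (1 + (K:ℤ)))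
      = ⌊t K * 2 ^ N⌋ / 2 ^ N := by
  have hdigit : ∀ j, sigma3 (binFrac (fun k => binDigit (t k) j) M / 2 * (2:ℝ) ^ (1 + (K:ℤ)))
      = binDigit (t K) j := by
    intro j
    rw [show ∀ a : ℝ, a / 2 * (2:ℝ) ^ (1 + (K:ℤ)) = a * 2 ^ K by
      intro a; rw [zpow_add₀ two_ne_zero, zpow_one, zpow_natCast]; ring]
    exact sigma3_binFrac_mul_two_pow (fun k => binDigit_eq_zero_or_one _ _) hK
  rw [← Finset.Ico_add_one_right_eq_Icc, sum_Ico_eq_sum_range, Nat.add_sub_cancel]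
  simp only [add_tsub_cancel_left, hdigit]
  rw [← sub_zero (_ / _), ← Int.cast_zero, ← Int.floor_eq_zero_iff.2 ht, ← binFrac_binDigit,
    binFrac]
  refine sum_congr rfl fun i _ => ?_
  rw [add_comm 1 i, zpow_neg, zpow_natCast, ← div_eq_inv_mul]

lemma abs_floor_mul_two_pow_div_sub_le (u : ℝ) (N : ℕ) :
    |⌊u * 2 ^ N⌋ / 2 ^ N - u| ≤ 1 / 2 ^ N := by
  have h2N : (0:ℝ) < 2 ^ N := by positivity
  have hfract : (⌊u * 2 ^ N⌋ : ℝ) / 2 ^ N - u = -Int.fract (u * 2 ^ N) / 2 ^ N := by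
    rw [Int.fract]; field_simp; ring
  rw [hfract, abs_div, abs_neg, abs_of_nonneg (Int.fract_nonneg _), abs_of_pos h2N]
  gcongr
  exact (Int.fract_lt_one _).le

lemma abs_floor_min_mul_two_pow_div_sub_le {u : ℝ} (hu : u ≤ 1) (N : ℕ) :
    |⌊min u (1 - 1 / 2 ^ N) * 2 ^ N⌋ / 2 ^ N - u| ≤ 1 / 2 ^ N := by
  rcases le_total u (1 - 1 / 2 ^ N) with hle | hle
  · rw [min_eq_left hle]
    exact abs_floor_mul_two_pow_div_sub_le u N
  · have hint : (1 - 1 / 2 ^ N) * (2:ℝ) ^ N = ((2 ^ N - 1 : ℤ) : ℝ) := by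
      push_cast; field_simp
    rw [min_eq_right hle, hint, Int.floor_intCast, ← hint,
      mul_div_cancel_right₀ _ (by positivity), abs_le]
    constructor <;> linarith

/-- `v ∈ [-ω, ω]` rescaled to `[0, 1]` and clamped below `1`, where all binary digits vanish.
For `ω = 0` it is `0`, since `x / 0 = 0`. -/
noncomputable def level (ω v : ℝ) (N : ℕ) : ℝ := min ((v + ω) / (2 * ω)) (1 - 1 / 2 ^ N)

section Level

variable {ω v : ℝ} (N : ℕ)

lemma level_mem_Ico (h : |v| ≤ ω) : level ω v N ∈ Set.Ico 0 1 := by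
  obtain ⟨hv0, hv1⟩ := abs_le.1 h
  have hpos : (0:ℝ) < 1 / 2 ^ N := by positivity
  have hle : (1:ℝ) / 2 ^ N ≤ 1 := (div_le_one (by positivity)).2 (one_le_pow₀ one_le_two)
  refine ⟨le_min (div_nonneg (by linarith) (by linarith)) (by linarith), ?_⟩
  exact (min_le_right _ _).trans_lt (by linarith)

lemma abs_two_mul_floor_level_sub_le (h : |v| ≤ ω) :
    |2 * ω * (⌊level ω v N * 2 ^ N⌋ / 2 ^ N) - ω - v| ≤ 2 * ω * (1 / 2 ^ N) := by
  obtain ⟨hv0, hv1⟩ := abs_le.1 h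
  set u := (v + ω) / (2 * ω)
  rcases (abs_nonneg v).trans h |>.eq_or_lt with hω | hω
  · have hv : v = 0 := by linarith
    simp [← hω, hv]
  have hu : 2 * ω * u - ω = v := by simp only [u]; field_simp; ring
  have hu1 : u ≤ 1 := (div_le_one (by linarith)).2 (by linarith)
  calc |2 * ω * (⌊level ω v N * 2 ^ N⌋ / 2 ^ N) - ω - v|
      = 2 * ω * |⌊level ω v N * 2 ^ N⌋ / 2 ^ N - u| := by
        have h2ω : 0 < 2 * ω := by linarith
        rw [← hu, ← abs_of_pos h2ω, ← abs_mul, abs_of_pos h2ω]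
        ring_nf
    _ ≤ 2 * ω * (1 / 2 ^ N) := by
        gcongr
        exact abs_floor_min_mul_two_pow_div_sub_le hu1 N

end Level

lemma isCompact_unitCube (d : ℕ) : IsCompact (unitCube d) := by
  have : unitCube d = WithLp.toLp 2 '' Set.univ.pi fun _ : Fin d => Set.Icc (0:ℝ) 1 := by
    ext x
    exact ⟨fun hx => ⟨WithLp.ofLp x, Set.mem_univ_pi.2 hx, rfl⟩,
      by rintro ⟨y, hy, rfl⟩; exact Set.mem_univ_pi.1 hy⟩
  rw [this]
  exact (isCompact_univ_pi fun _ => isCompact_Icc).image (PiLp.continuous_toLp 2 _)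

lemma zero_mem_unitCube (d : ℕ) : (0 : EuclideanSpace ℝ (Fin d)) ∈ unitCube d :=
  fun _ => by simp

lemma abs_sub_le_modCont {d : ℕ} {f : EuclideanSpace ℝ (Fin d) → ℝ}
    (hf : ContinuousOn f (unitCube d)) {r : ℝ} {x y : EuclideanSpace ℝ (Fin d)}
    (hx : x ∈ unitCube d) (hy : y ∈ unitCube d) (hxy : ‖x - y‖ ≤ r) :
    |f x - f y| ≤ modCont d f r := by
  obtain ⟨C, hC⟩ := (isCompact_unitCube d).exists_bound_of_continuousOn hf
  refine le_csSup ⟨2 * C, ?_⟩ ⟨x, hx, y, hy, hxy, rfl⟩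
  rintro t ⟨x, hx, y, hy, -, rfl⟩
  have hx := hC x hx
  have hy := hC y hy
  rw [Real.norm_eq_abs] at hx hy
  linarith [abs_sub (f x) (f y)]

lemma EuclideanSpace.norm_le_sqrt_card_mul {d : ℕ} {z : EuclideanSpace ℝ (Fin d)} {s : ℝ}
    (hs : 0 ≤ s) (hz : ∀ i, |z i| ≤ s) : ‖z‖ ≤ √d * s := by
  rw [EuclideanSpace.norm_eq, ← Real.sqrt_sq hs, ← Real.sqrt_mul (Nat.cast_nonneg d)]
  gcongr
  calc ∑ i, ‖z i‖ ^ 2 ≤ ∑ _i : Fin d, s ^ 2 := by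
        gcongr with i
        rw [Real.norm_eq_abs]
        exact hz i
    _ = d * s ^ 2 := by simp

/-- The lower corner of the cell of mesh `2⁻ᴺ` whose coordinates, times `2ᴺ`, are the base-`2ᴺ`
digits of `k`. -/
noncomputable def dyadicCorner (d N k : ℕ) : EuclideanSpace ℝ (Fin d) :=
  WithLp.toLp 2 fun i => ((k / (2 ^ N) ^ (i : ℕ) % 2 ^ N : ℕ) : ℝ) / 2 ^ N

lemma dyadicCorner_mem_unitCube (d N k : ℕ) : dyadicCorner d N k ∈ unitCube d := by
  intro i
  have hlt : k / (2 ^ N) ^ (i : ℕ) % 2 ^ N < 2 ^ N := Nat.mod_lt _ (by positivity)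
  simp only [dyadicCorner, PiLp.toLp_apply, Set.mem_Icc]
  refine ⟨by positivity, (div_le_one (by positivity)).2 ?_⟩
  exact_mod_cast hlt.le

lemma norm_dyadicCorner_le (d N k : ℕ) : ‖dyadicCorner d N k‖ ≤ √d := by
  refine (EuclideanSpace.norm_le_sqrt_card_mul zero_le_one fun i => ?_).trans_eq (mul_one _)
  obtain ⟨h0, h1⟩ := dyadicCorner_mem_unitCube d N k i
  rwa [abs_of_nonneg h0]

lemma dyadicCorner_finFunctionFinEquiv {d N : ℕ} (m : Fin d → Fin (2 ^ N)) (i : Fin d) :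
    dyadicCorner d N (finFunctionFinEquiv m) i = (m i : ℝ) / 2 ^ N := by
  show ((finFunctionFinEquiv.symm (finFunctionFinEquiv m) i : ℕ) : ℝ) / 2 ^ N = _
  rw [Equiv.symm_apply_apply]

lemma exists_dyadicCorner {d : ℕ} {x : EuclideanSpace ℝ (Fin d)}
    (hx : ∀ i, x i ∈ Set.Ico (0:ℝ) 1) (N : ℕ) : ∃ k : ℕ, k < (2 ^ N) ^ d ∧
      ∑ i : Fin d, (2:ℤ) ^ ((i:ℕ) * N) * ⌊(2:ℝ) ^ N * x i⌋ = k ∧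
      ‖x - dyadicCorner d N k‖ ≤ √d * (1 / 2 ^ N) := by
  have hfloor0 : ∀ i, 0 ≤ ⌊(2:ℝ) ^ N * x i⌋ := fun i =>
    Int.floor_nonneg.2 (mul_nonneg (by positivity) (hx i).1)
  have hfloor_lt : ∀ i, ⌊(2:ℝ) ^ N * x i⌋.toNat < 2 ^ N := fun i => by
    have : ⌊(2:ℝ) ^ N * x i⌋ < ((2 ^ N : ℕ) : ℤ) := by
      rw [Int.floor_lt]; push_cast; exact mul_lt_of_lt_one_right (by positivity) (hx i).2
    exact (Int.toNat_lt' (by positivity)).2 this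
  set m : Fin d → Fin (2 ^ N) := fun i => ⟨_, hfloor_lt i⟩
  have hm : ∀ i, ((m i : ℕ) : ℤ) = ⌊(2:ℝ) ^ N * x i⌋ := fun i => Int.toNat_of_nonneg (hfloor0 i)
  refine ⟨finFunctionFinEquiv m, (finFunctionFinEquiv m).isLt, ?_, ?_⟩
  · rw [finFunctionFinEquiv_apply]
    push_cast
    refine sum_congr rfl fun i _ => ?_
    rw [hm, pow_mul', mul_comm]
  · refine EuclideanSpace.norm_le_sqrt_card_mul (by positivity) fun i => ?_
    have hmi : ((m i : ℕ) : ℝ) = ⌊(2:ℝ) ^ N * x i⌋ := by exact_mod_cast hm i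
    rw [PiLp.sub_apply, dyadicCorner_finFunctionFinEquiv, hmi, abs_sub_comm, mul_comm]
    exact abs_floor_mul_two_pow_div_sub_le (x i) N

theorem stmt7_general (d : ℕ) (f : EuclideanSpace ℝ (Fin d) → ℝ)
    (hf : ContinuousOn f (unitCube d)) (N : ℕ) :
    ∃ a : ℕ → ℝ, (∀ j, a j ∈ Set.Ico (0:ℝ) (1/2)) ∧
      ∀ x : EuclideanSpace ℝ (Fin d), (∀ i, x i ∈ Set.Ico (0:ℝ) 1) →
        |(2 * modCont d f (Real.sqrt d) *
            ∑ j ∈ Finset.Icc 1 N, (2:ℝ) ^ (-(j:ℤ)) *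
              sigma3 (a j * (2:ℝ) ^
                (1 + ∑ i : Fin d, (2:ℤ) ^ ((i:ℕ) * N) * ⌊(2:ℝ) ^ N * x i⌋))
          + f 0 - modCont d f (Real.sqrt d)) - f x|
        ≤ 2 * modCont d f (Real.sqrt d) * (2:ℝ) ^ (-(N:ℤ))
          + modCont d f (Real.sqrt d * (2:ℝ) ^ (-(N:ℤ))) := by
  set ω := modCont d f (Real.sqrt d)
  have hcorner : ∀ k, |f (dyadicCorner d N k) - f 0| ≤ ω := fun k =>
    abs_sub_le_modCont hf (dyadicCorner_mem_unitCube d N k) (zero_mem_unitCube d)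
      (by simpa using norm_dyadicCorner_le d N k)
  set t : ℕ → ℝ := fun k => level ω (f (dyadicCorner d N k) - f 0) N
  have hbits : ∀ j, binFrac (fun k => binDigit (t k) j) ((2 ^ N) ^ d) ∈ Set.Ico 0 1 := fun j =>
    binFrac_mem_Ico (fun k => binDigit_eq_zero_or_one (t k) j) _
  refine ⟨fun j => binFrac (fun k => binDigit (t k) (j - 1)) ((2 ^ N) ^ d) / 2,
    fun j => ⟨by linarith [(hbits (j - 1)).1], by linarith [(hbits (j - 1)).2]⟩, fun x hx => ?_⟩
  obtain ⟨K, hK, hKsum, hKdist⟩ := exists_dyadicCorner hx N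
  have hxK : |f (dyadicCorner d N K) - f x| ≤ modCont d f (√d * (1 / 2 ^ N)) :=
    abs_sub_le_modCont hf (dyadicCorner_mem_unitCube d N K)
      (fun i => Set.Ico_subset_Icc_self (hx i)) (by rwa [norm_sub_rev])
  rw [hKsum, sum_sigma3_binFrac_binDigit t (level_mem_Ico N (hcorner K)) hK,
    zpow_neg, zpow_natCast, inv_eq_one_div]
  calc _ = |(2 * ω * (⌊t K * 2 ^ N⌋ / 2 ^ N) - ω - (f (dyadicCorner d N K) - f 0))
          + (f (dyadicCorner d N K) - f x)| := by ring_nf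
    _ ≤ _ := (abs_add_le _ _).trans
          (add_le_add (abs_two_mul_floor_level_sub_le N (hcorner K)) hxK)

theorem stmt7 (d : ℕ) (hd : 0 < d) (f : EuclideanSpace ℝ (Fin d) → ℝ)
    (hf : ContinuousOn f (unitCube d)) (N : ℕ) (hN : 0 < N) :
    ∃ a : ℕ → ℝ, (∀ j, a j ∈ Set.Ico (0:ℝ) (1/2)) ∧
      ∀ x : EuclideanSpace ℝ (Fin d), (∀ i, x i ∈ Set.Ico (0:ℝ) 1) →
        |(2 * modCont d f (Real.sqrt d) *
            ∑ j ∈ Finset.Icc 1 N, (2:ℝ) ^ (-(j:ℤ)) *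
              sigma3 (a j * (2:ℝ) ^
                (1 + ∑ i : Fin d, (2:ℤ) ^ ((i:ℕ) * N) * ⌊(2:ℝ) ^ N * x i⌋))
          + f 0 - modCont d f (Real.sqrt d)) - f x|
        ≤ 2 * modCont d f (Real.sqrt d) * (2:ℝ) ^ (-(N:ℤ))
          + modCont d f (Real.sqrt d * (2:ℝ) ^ (-(N:ℤ))) :=
  stmt7_general d f hf N
end

section
/- The family of functions {x ↦ σ₃(a·x) : a ∈ ℝ} on ℝ shatters sets of arbitrary finite size: for every m and every assignment θ₁,...,θ_m ∈ {0,1}, there exists a ∈ ℝ such that σ₃(a·2^k) = θ_k for all k ∈ {1,...,m}. Hence the VC-dimension of this family is infinite. -/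
lemma sigma3_add_intCast (x : ℝ) (n : ℤ) : sigma3 (x + n) = sigma3 x := by
  simp only [sigma3, Int.fract_add_intCast]

lemma sigma3_div_two_add {b t : ℝ} (hb : b ∈ ({0, 1} : Set ℝ)) (ht₀ : 0 ≤ t) (ht : t < 1 / 2) :
    sigma3 (b / 2 + t) = b := by
  rcases hb with rfl | rfl
  · rw [sigma3, Int.fract_eq_self.mpr ⟨by linarith, by linarith⟩, if_neg (by linarith)]
  · rw [sigma3, Int.fract_eq_self.mpr ⟨by linarith, by linarith⟩, if_pos (by linarith)]

lemma exists_mem_Ico_sigma3_mul_two_pow_eq (m : ℕ) (θ : ℕ → ℝ)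
    (hθ : ∀ k, θ k ∈ ({0, 1} : Set ℝ)) :
    ∃ a ∈ Set.Ico (0 : ℝ) (1 / 2), ∀ k ∈ Finset.Icc 1 m, sigma3 (a * 2 ^ k) = θ k := by
  induction m generalizing θ with
  | zero => exact ⟨0, by norm_num, by simp⟩
  | succ m ih =>
    obtain ⟨a, ⟨ha₀, ha⟩, hshift⟩ := ih (fun k => θ (k + 1)) fun k => hθ (k + 1)
    have hθ₁ := hθ 1
    refine ⟨θ 1 / 4 + a / 2, ?_, fun k hk => ?_⟩
    · rcases hθ₁ with h | h <;> rw [h] <;> constructor <;> linarith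
    obtain ⟨hk₁, hkm⟩ := Finset.mem_Icc.mp hk
    obtain rfl | ⟨i, rfl⟩ : k = 1 ∨ ∃ i, k = i + 2 := by
      rcases k with _ | _ | i <;> simp_all
    · rw [show (θ 1 / 4 + a / 2) * 2 ^ 1 = θ 1 / 2 + a by ring]
      exact sigma3_div_two_add hθ₁ ha₀ ha
    · obtain ⟨n, hn⟩ : ∃ n : ℤ, θ 1 * 2 ^ i = n := by
        rcases hθ₁ with h | h <;> rw [h]
        · exact ⟨0, by simp⟩
        · exact ⟨2 ^ i, by simp⟩
      rw [show (θ 1 / 4 + a / 2) * 2 ^ (i + 2) = a * 2 ^ (i + 1) + θ 1 * 2 ^ i by ring, hn,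
        sigma3_add_intCast]
      exact hshift (i + 1) (Finset.mem_Icc.mpr ⟨by omega, by omega⟩)

/-- The family {x ↦ σ₃(a·x) : a ∈ ℝ} shatters the points 2¹, …, 2^m for every m:
it realizes every dichotomy, hence has infinite VC-dimension. -/
theorem stmt13 (m : ℕ) (θ : ℕ → ℝ) (hθ : ∀ k, θ k ∈ ({0, 1} : Set ℝ)) :
    ∃ a : ℝ, ∀ k ∈ Finset.Icc 1 m, sigma3 (a * (2:ℝ) ^ k) = θ k := by
  obtain ⟨a, -, ha⟩ := exists_mem_Ico_sigma3_mul_two_pow_eq m θ hθ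
  exact ⟨a, ha⟩
end

section
/- The family {x ↦ cos(a·x) : a ∈ ℝ} of functions on ℝ, thresholded by T(t) = 1_{t ≥ 0}, has infinite VC-dimension: for every m there exist points x₁,...,x_m ∈ ℝ shattered by {x ↦ T(cos(ax)) : a ∈ ℝ}. -/
/-!
Take the points `xᵢ = π / 4ⁱ` and, to realise the pattern with zeros exactly on a set `s`,
the frequency `a = ∑_{j ∈ s} 4ʲ`. Then `a xᵢ / π` splits into the low digits, which add up to
less than `1/2`, the digit `[i ∈ s]`, and the high digits, which contribute an even integer.
So `a xᵢ` lies within `π/2` of `0` or of `π` modulo `2π`, according as `i ∉ s` or `i ∈ s`.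
-/

open Finset Real

lemma two_mul_sum_four_pow_lt {s : Finset ℕ} {i : ℕ} (hs : ∀ j ∈ s, j < i) :
    2 * ∑ j ∈ s, 4 ^ j < 4 ^ i := by
  have hgeom : (∑ j ∈ range i, 4 ^ j) * 3 + 1 = 4 ^ i := geom_sum_mul_add 3 i
  have hsub : ∑ j ∈ s, 4 ^ j ≤ ∑ j ∈ range i, 4 ^ j :=
    sum_le_sum_of_subset fun j hj => mem_range.2 (hs j hj)
  omega

lemma exists_sum_four_pow_eq (s : Finset ℕ) (i : ℕ) :
    ∃ L K : ℕ, 2 * L < 4 ^ i ∧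
      ∑ j ∈ s, 4 ^ j = L + (if i ∈ s then 4 ^ i else 0) + 2 * 4 ^ i * K := by
  obtain ⟨K, hK⟩ : 2 * 4 ^ i ∣ ∑ j ∈ s with i < j, 4 ^ j :=
    dvd_sum fun j hj => dvd_trans (⟨2, by ring⟩ : 2 * 4 ^ i ∣ 4 ^ (i + 1))
      (pow_dvd_pow 4 (mem_filter.1 hj).2)
  refine ⟨∑ j ∈ s with j < i, 4 ^ j, K,
    two_mul_sum_four_pow_lt fun j hj => (mem_filter.1 hj).2, ?_⟩
  rw [← hK, ← sum_ite_eq' s i (4 ^ ·), sum_filter, sum_filter, ← sum_add_distrib,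
    ← sum_add_distrib]
  refine sum_congr rfl fun j _ => ?_
  split_ifs <;> omega

lemma cos_sum_four_pow_mul_pi_div_nonneg_iff (s : Finset ℕ) (i : ℕ) :
    0 ≤ cos ((∑ j ∈ s, (4 : ℝ) ^ j) * (π / 4 ^ i)) ↔ i ∉ s := by
  obtain ⟨L, K, hL, hsum⟩ := exists_sum_four_pow_eq s i
  have h4 : (0 : ℝ) < 4 ^ i := by positivity
  have hlow : 0 < cos (π * (L / 4 ^ i)) := by
    have hL' : (L : ℝ) / 4 ^ i < 1 / 2 := by
      have hLℝ : (2 : ℝ) * L < 4 ^ i := by exact_mod_cast hL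
      rw [div_lt_iff₀ h4]
      linarith
    refine cos_pos_of_mem_Ioo ⟨?_, ?_⟩ <;> nlinarith [pi_pos, div_nonneg L.cast_nonneg h4.le]
  have hangle : (∑ j ∈ s, (4 : ℝ) ^ j) * (π / 4 ^ i)
      = π * (L / 4 ^ i) + (if i ∈ s then π else 0) + K * (2 * π) := by
    have hsumℝ := congrArg (Nat.cast : ℕ → ℝ) hsum
    push_cast at hsumℝ
    rw [hsumℝ]
    split_ifs
    · field_simp
    · field_simp; ring
  rw [hangle, cos_add_nat_mul_two_pi]
  split_ifs with hi
  · simp [hi, cos_add_pi, hlow]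
  · simp [hi, hlow.le]

/-- The family {x ↦ 1_{cos(ax) ≥ 0} : a ∈ ℝ} has infinite VC-dimension: for every m
there are m points shattered by it. -/
theorem stmt14 (m : ℕ) :
    ∃ x : Fin m → ℝ, ∀ θ : Fin m → ℝ, (∀ i, θ i ∈ ({0, 1} : Set ℝ)) →
      ∃ a : ℝ, ∀ i, (if 0 ≤ Real.cos (a * x i) then (1:ℝ) else 0) = θ i := by
  refine ⟨fun i => π / 4 ^ (i : ℕ), fun θ hθ => ?_⟩
  set s := (univ.filter (θ · = 0)).map Fin.valEmbedding
  refine ⟨∑ j ∈ s, (4 : ℝ) ^ j, fun i => ?_⟩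
  have hmem : (i : ℕ) ∈ s ↔ θ i = 0 :=
    (mem_map' Fin.valEmbedding).trans (by simp)
  simp only [cos_sum_four_pow_mul_pi_div_nonneg_iff, hmem]
  rcases hθ i with h | h <;> simp_all
end
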